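/- Load-store elimination is semantics-preserving: if a program contains 't := load M' followed later by 'store M t', with no intervening assignment to t and no intervening store to address M, then deleting the store yields a program with the same final memory and store for every initial state. -/

import Mathlib

inductive Expr (Var : Type) where
  | var : Var → Expr Var
  | const : ℤ → Expr Var
  | add : Expr Var → Expr Var → Expr Var
  | sub : Expr Var → Expr Var → Expr Var
  | mul : Expr Var → Expr Var → Expr Var

def Expr.eval {Var : Type} (σ : Var → ℤ) : Expr Var → ℤ
  | .var x => σ x
  | .const n => n
  | .add a b => a.eval σ + b.eval σ
  | .sub a b => a.eval σ - b.eval σ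
  | .mul a b => a.eval σ * b.eval σ

inductive Stmt (Var Addr : Type) where
  | assign : Var → Expr Var → Stmt Var Addr
  | store : Addr → Expr Var → Stmt Var Addr
  | load : Var → Addr → Stmt Var Addr

def run {Var Addr : Type} [DecidableEq Var] [DecidableEq Addr] :
    List (Stmt Var Addr) → (Var → ℤ) × (Addr → ℤ) → (Var → ℤ) × (Addr → ℤ)
  | [], s => s
  | .assign v e :: p, (σ, μ) => run p (Function.update σ v (e.eval σ), μ)
  | .store a e :: p, (σ, μ) => run p (σ, Function.update μ a (e.eval σ))
  | .load v a :: p, (σ, μ) => run p (Function.update σ v (μ a), μ)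

/-! Right after `t := load M` the variable `t` holds the contents of `M`. The middle block
writes neither `t` nor `M`, so this agreement still holds when `store M t` is reached, and that
store rewrites `M` with the value it already has. -/

section Run

variable {Var Addr : Type} [DecidableEq Var] [DecidableEq Addr]

theorem run_append (p q : List (Stmt Var Addr)) (st : (Var → ℤ) × (Addr → ℤ)) :
    run (p ++ q) st = run q (run p st) := by
  induction p generalizing st with
  | nil => rfl
  | cons s p ih =>
    obtain ⟨σ, μ⟩ := st
    cases s <;> simp only [List.cons_append, run, ih]

theorem run_fst_apply_of_forall_ne (p : List (Stmt Var Addr)) (t : Var)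
    (hp : ∀ s ∈ p, (∀ e : Expr Var, s ≠ .assign t e) ∧ (∀ b : Addr, s ≠ .load t b))
    (st : (Var → ℤ) × (Addr → ℤ)) :
    (run p st).1 t = st.1 t := by
  induction p generalizing st with
  | nil => rfl
  | cons s p ih =>
    obtain ⟨σ, μ⟩ := st
    obtain ⟨hassign, hload⟩ := hp s List.mem_cons_self
    have ih := ih fun s hs => hp s (List.mem_cons_of_mem _ hs)
    cases s with
    | assign v e =>
      have hv : t ≠ v := by rintro rfl; exact hassign e rfl
      exact (ih _).trans (Function.update_of_ne hv _ _)
    | store a e => exact ih _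
    | load v a =>
      have hv : t ≠ v := by rintro rfl; exact hload a rfl
      exact (ih _).trans (Function.update_of_ne hv _ _)

theorem run_snd_apply_of_forall_ne (p : List (Stmt Var Addr)) (M : Addr)
    (hp : ∀ s ∈ p, ∀ e : Expr Var, s ≠ .store M e) (st : (Var → ℤ) × (Addr → ℤ)) :
    (run p st).2 M = st.2 M := by
  induction p generalizing st with
  | nil => rfl
  | cons s p ih =>
    obtain ⟨σ, μ⟩ := st
    have ih := ih fun s hs => hp s (List.mem_cons_of_mem _ hs)
    cases s with
    | assign v e => exact ih _
    | store a e =>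
      have ha : M ≠ a := by rintro rfl; exact hp _ List.mem_cons_self e rfl
      exact (ih _).trans (Function.update_of_ne ha _ _)
    | load v a => exact ih _

theorem run_store_var_of_eq {t : Var} {M : Addr} {σ : Var → ℤ} {μ : Addr → ℤ}
    (h : σ t = μ M) : run [.store M (.var t)] (σ, μ) = (σ, μ) := by
  change (σ, Function.update μ M (σ t)) = (σ, μ)
  rw [h, Function.update_eq_self]

end Run

/-- Load-store elimination is semantics-preserving: if `t := load M` is
followed later by `store M t`, with no intervening write to `t` and no
intervening store to `M`, then deleting the store yields a program with the
same final state for every initial state. -/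
theorem loadStoreElim_preserves_semantics {Var Addr : Type}
    [DecidableEq Var] [DecidableEq Addr]
    (p₁ mid p₃ : List (Stmt Var Addr)) (t : Var) (M : Addr)
    (hmid : ∀ s ∈ mid, (∀ e : Expr Var, s ≠ .assign t e) ∧
      (∀ b : Addr, s ≠ .load t b) ∧ (∀ e : Expr Var, s ≠ .store M e)) :
    ∀ st : (Var → ℤ) × (Addr → ℤ),
      run (p₁ ++ [.load t M] ++ mid ++ [.store M (.var t)] ++ p₃) st
        = run (p₁ ++ [.load t M] ++ mid ++ p₃) st := by
  intro st
  simp only [run_append]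
  obtain ⟨σ, μ⟩ := run p₁ st
  set beforeStore := run mid (Function.update σ t (μ M), μ)
  have hsync : beforeStore.1 t = beforeStore.2 M := by
    rw [run_fst_apply_of_forall_ne mid t (fun s hs => ⟨(hmid s hs).1, (hmid s hs).2.1⟩),
      run_snd_apply_of_forall_ne mid M (fun s hs => (hmid s hs).2.2)]
    exact Function.update_self t (μ M) σ
  exact congrArg (run p₃) (run_store_var_of_eq hsync)
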